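/- arXiv:2505.11573 — 4 statements merged into one kernel-verified Lean document; each statement's English description precedes it below -/
import Mathlib

section
/- Let X be a compact Hausdorff space, σ : X → X a surjective local homeomorphism, and ψ : X → ℝ≥0 a continuous function. Define L_ψ(f)(x) = ∑_{y ∈ σ⁻¹(x)} ψ(y) f(y) for f ∈ C(X). Then L_ψ(f) is continuous, i.e., L_ψ maps C(X) into C(X), and L_ψ is a positive linear map satisfying the module property L_ψ(f · (a ∘ σ)) = L_ψ(f) · a for all f, a ∈ C(X). -/
open scoped ComplexOrder

/-- The transfer operator with potential `ψ`:
`Lpsi σ ψ f x = ∑_{σ y = x} ψ y * f y`. -/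
noncomputable def Lpsi {X : Type*} (σ : X → X) (ψ : X → ℝ) (f : X → ℂ) : X → ℂ :=
  fun x => ∑' y : (σ ⁻¹' {x} : Set X), (ψ (y : X) : ℂ) * f (y : X)

/-!
A local homeomorphism of a compact Hausdorff space is a covering map, and its fibres are closed
and discrete, hence finite. Over an evenly covered open set `U` with fibre `I`, the fibre sum of a
continuous `g` is `x ↦ ∑ i : I, g (s_i x)` for the continuous sheets `s_i : U → X`, so it is
continuous. Linearity, positivity and the module property hold fibrewise, the last because
`a (σ y) = a x` for every `y` in the fibre over `x`.
-/

section FiberSum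

variable {E X I : Type*} [TopologicalSpace E] [TopologicalSpace X] [TopologicalSpace I]
  {p : E → X}

def fiberEquivOfHomeomorph {U : Set X} (H : p ⁻¹' U ≃ₜ U × I) (hH : ∀ e, (H e).1.1 = p e)
    (x : U) : I ≃ p ⁻¹' {(x : X)} where
  toFun i := ⟨H.symm (x, i), by simp [← hH]⟩
  invFun e := (H ⟨e, by simp [show p e = x from e.2]⟩).2
  left_inv i := by simp
  right_inv e := by
    have hx : (H ⟨e, by simp [show p e = x from e.2]⟩).1 = x :=
      Subtype.ext (by simp [hH, show p e = x from e.2])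
    ext
    simp [← hx]

theorem IsEvenlyCovered.continuousAt_tsum_fiber {M : Type*} [AddCommMonoid M] [TopologicalSpace M]
    [ContinuousAdd M] [Finite I] {x₀ : X} (h : IsEvenlyCovered p x₀ I) {g : E → M}
    (hg : Continuous g) : ContinuousAt (fun x => ∑' e : p ⁻¹' {x}, g e) x₀ := by
  obtain ⟨-, U, hx₀U, hU, -, H, hH⟩ := h
  have : Fintype I := Fintype.ofFinite I
  have hlocal :
      U.domRestrict (fun x => ∑' e : p ⁻¹' {x}, g e) = fun x => ∑ i, g (H.symm (x, i)) := by
    funext x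
    rw [Set.domRestrict_apply, ← (fiberEquivOfHomeomorph H hH x).tsum_eq, tsum_fintype]
    rfl
  refine ((continuousWithinAt_iff_continuousAt_domRestrict _ hx₀U).2 ?_).continuousAt
    (hU.mem_nhds hx₀U)
  rw [hlocal]
  fun_prop

theorem IsCoveringMap.continuous_tsum_fiber {M : Type*} [AddCommMonoid M] [TopologicalSpace M]
    [ContinuousAdd M] (hp : IsCoveringMap p) (hfin : ∀ x, (p ⁻¹' {x}).Finite) {g : E → M}
    (hg : Continuous g) : Continuous fun x => ∑' e : p ⁻¹' {x}, g e :=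
  continuous_iff_continuousAt.2 fun x =>
    have := (hfin x).to_subtype
    (hp x).continuousAt_tsum_fiber hg

theorem IsCoveringMap.finite_preimage_singleton [CompactSpace E] [T1Space X]
    (hp : IsCoveringMap p) (x : X) : (p ⁻¹' {x}).Finite :=
  (isClosed_singleton.preimage hp.continuous).isCompact.finite ⟨(hp x).discreteTopology_fiber⟩

end FiberSum

section Lpsi

variable {X : Type*} {σ : X → X} {ψ : X → ℝ}

theorem continuous_Lpsi [TopologicalSpace X] (hσ : IsCoveringMap σ)
    (hfin : ∀ x, (σ ⁻¹' {x}).Finite) (hψ : Continuous ψ) {f : X → ℂ} (hf : Continuous f) :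
    Continuous (Lpsi σ ψ f) :=
  hσ.continuous_tsum_fiber hfin (g := fun y => (ψ y : ℂ) * f y) (by fun_prop)

theorem Lpsi_add (hfin : ∀ x, (σ ⁻¹' {x}).Finite) (f g : X → ℂ) :
    Lpsi σ ψ (f + g) = Lpsi σ ψ f + Lpsi σ ψ g := by
  funext x
  have := (hfin x).to_subtype
  simp only [Lpsi, Pi.add_apply, mul_add]
  exact Summable.of_finite.tsum_add Summable.of_finite

theorem Lpsi_smul (c : ℂ) (f : X → ℂ) : Lpsi σ ψ (c • f) = c • Lpsi σ ψ f := by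
  funext x
  simp only [Lpsi, Pi.smul_apply, smul_eq_mul, ← tsum_mul_left, mul_left_comm]

theorem Lpsi_nonneg (hψ : ∀ x, 0 ≤ ψ x) {f : X → ℂ} (hf : ∀ x, 0 ≤ f x) (x : X) :
    0 ≤ Lpsi σ ψ f x :=
  tsum_nonneg fun y => mul_nonneg (by exact_mod_cast hψ y) (hf y)

theorem Lpsi_mul_comp (f a : X → ℂ) :
    Lpsi σ ψ (fun x => f x * a (σ x)) = fun x => Lpsi σ ψ f x * a x := by
  funext x
  simp only [Lpsi, ← tsum_mul_right, ← mul_assoc]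
  exact tsum_congr fun y => by rw [show σ y = x from y.2]

end Lpsi

theorem transfer_operator_continuous_positive_module_general {X : Type*} [TopologicalSpace X]
    [CompactSpace X] [T2Space X] (σ : X → X) (hloc : IsLocalHomeomorph σ)
    (ψ : X → ℝ) (hψc : Continuous ψ) (hψ0 : ∀ x, 0 ≤ ψ x) :
    (∀ f : X → ℂ, Continuous f → Continuous (Lpsi σ ψ f)) ∧
    (∀ f g : X → ℂ, Lpsi σ ψ (f + g) = Lpsi σ ψ f + Lpsi σ ψ g) ∧
    (∀ (c : ℂ) (f : X → ℂ), Lpsi σ ψ (c • f) = c • Lpsi σ ψ f) ∧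
    (∀ f : X → ℂ, (∀ x, 0 ≤ f x) → ∀ x, 0 ≤ Lpsi σ ψ f x) ∧
    (∀ f a : X → ℂ, Lpsi σ ψ (fun x => f x * a (σ x)) = fun x => Lpsi σ ψ f x * a x) := by
  have hcov : IsCoveringMap σ := isLocalHomeomorph_iff_isCoveringMap.mp hloc
  have hfin : ∀ x, (σ ⁻¹' {x}).Finite := hcov.finite_preimage_singleton
  exact ⟨fun f => continuous_Lpsi hcov hfin hψc, Lpsi_add hfin, Lpsi_smul,
    fun f => Lpsi_nonneg hψ0, Lpsi_mul_comp⟩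

/-- For a surjective local homeomorphism `σ` of a compact Hausdorff space and a continuous
nonnegative potential `ψ`, the transfer operator `L_ψ` maps `C(X)` into `C(X)`, and is a
positive linear map satisfying the module property
`L_ψ (f · (a ∘ σ)) = L_ψ(f) · a`. -/
theorem transfer_operator_continuous_positive_module {X : Type*} [TopologicalSpace X]
    [CompactSpace X] [T2Space X] (σ : X → X) (hloc : IsLocalHomeomorph σ)
    (hsurj : Function.Surjective σ) (ψ : X → ℝ) (hψc : Continuous ψ) (hψ0 : ∀ x, 0 ≤ ψ x) :
    (∀ f : X → ℂ, Continuous f → Continuous (Lpsi σ ψ f)) ∧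
    (∀ f g : X → ℂ, Lpsi σ ψ (f + g) = Lpsi σ ψ f + Lpsi σ ψ g) ∧
    (∀ (c : ℂ) (f : X → ℂ), Lpsi σ ψ (c • f) = c • Lpsi σ ψ f) ∧
    (∀ f : X → ℂ, (∀ x, 0 ≤ f x) → ∀ x, 0 ≤ Lpsi σ ψ f x) ∧
    (∀ f a : X → ℂ, Lpsi σ ψ (fun x => f x * a (σ x)) = fun x => Lpsi σ ψ f x * a x) :=
  transfer_operator_continuous_positive_module_general σ hloc ψ hψc hψ0
end

section
/- Let X be a compact Hausdorff space and σ : X → X a surjective local homeomorphism. Every positive linear map L : C(X) → C(X) satisfying L(f · (a ∘ σ)) = L(f) · a for all f, a ∈ C(X) is given by a unique continuous nonnegative function ψ on X via L(f)(x) = ∑_{σ(y)=x} ψ(y) f(y). -/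
open scoped ComplexOrder

/-!
Positive maps between C⋆-algebras are bounded. Given `f` vanishing on the fiber `σ⁻¹(x)`, Urysohn
gives `a` with `a x = 1` and `‖f · (a ∘ σ)‖` arbitrarily small, so the module property forces
`L f x = 0`: `L f x` only depends on `f` restricted to the (finite) fiber over `x`. Choosing bumps
`h_y` that equal `1` near `y` and, for `z` near `y`, vanish on the rest of the fiber through `z`, `f`
agrees on `σ⁻¹(x)` with `∑ f(y) h_y`, whence `L f x = ∑ ψ(y) f(y)` for `ψ(y) = L(h_y)(σ y)`. Near `y`
we also have `ψ(z) = L(h_y)(σ z)`, which gives continuity, and testing against `h_y` gives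
uniqueness.
-/

open Topology

lemma IsLocalHomeomorph.finite_preimage_singleton {X Y : Type*} [TopologicalSpace X]
    [TopologicalSpace Y] [CompactSpace X] [T1Space Y] {f : X → Y} (hf : IsLocalHomeomorph f)
    (y : Y) : (f ⁻¹' {y}).Finite :=
  (isClosed_singleton.preimage hf.continuous).isCompact.finite <|
    hf.isLocalHomeomorphOn.isDiscrete_of_image <|
      Set.subsingleton_singleton.anti (Set.image_preimage_subset f {y}) |>.isDiscrete

lemma IsLocalHomeomorph.exists_bump_isolating_fiber_points {X Y : Type*} [TopologicalSpace X]
    [TopologicalSpace Y] [NormalSpace X] [T1Space X] {f : X → Y} (hf : IsLocalHomeomorph f)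
    (y : X) : ∃ h : C(X, ℂ), (∀ w, 0 ≤ h w) ∧ ∃ V ∈ 𝓝 y,
      ∀ z ∈ V, h z = 1 ∧ ∀ w, f w = f z → w ≠ z → h w = 0 := by
  obtain ⟨e, hye, rfl⟩ := hf y
  obtain ⟨V, hV, hVc, hVU⟩ := exists_mem_nhds_isClosed_subset (e.open_source.mem_nhds hye)
  obtain ⟨b, hb0, hb1, hb⟩ := exists_continuous_zero_one_of_isClosed
    e.open_source.isClosed_compl hVc (Set.disjoint_compl_left_iff_subset.2 hVU)
  refine ⟨⟨fun w => (b w : ℂ), by fun_prop⟩, fun w => Complex.zero_le_real.2 (hb w).1, V, hV,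
    fun z hz => ⟨by simp [hb1 hz], fun w hw hwz => ?_⟩⟩
  have hw' : w ∉ e.source := fun hw' => hwz (e.injOn hw' (hVU hz) hw)
  simp [hb0 hw']

lemma ContinuousMap.exists_apply_eq_one_norm_mul_comp_le {X Y : Type*} [TopologicalSpace X]
    [TopologicalSpace Y] [CompactSpace X] [T2Space Y] [NormalSpace Y] (σ : C(X, Y))
    {f : C(X, ℂ)} {x : Y} (hf : ∀ y, σ y = x → f y = 0) {ε : ℝ} (hε : 0 < ε) :
    ∃ a : C(Y, ℂ), a x = 1 ∧ ‖f * a.comp σ‖ ≤ ε := by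
  set V := {y | ‖f y‖ < ε}
  have hK : IsClosed (σ '' Vᶜ) :=
    ((isOpen_lt (by fun_prop) continuous_const).isClosed_compl.isCompact.image
      σ.continuous).isClosed
  have hx : x ∉ σ '' Vᶜ := by
    rintro ⟨y, hy, rfl⟩
    exact hy (by simp [V, hf y rfl, hε])
  obtain ⟨b, hb0, hb1, hb⟩ := exists_continuous_zero_one_of_isClosed hK isClosed_singleton
    (Set.disjoint_singleton_right.2 hx)
  refine ⟨⟨fun w => (b w : ℂ), by fun_prop⟩, by simp [hb1 rfl],
    (ContinuousMap.norm_le _ hε.le).2 fun y => ?_⟩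
  by_cases hy : y ∈ V
  · calc ‖f y * b (σ y)‖ = ‖f y‖ * b (σ y) := by simp [abs_of_nonneg (hb _).1]
      _ ≤ ‖f y‖ * 1 := by gcongr; exact (hb _).2
      _ ≤ ε := by simpa using le_of_lt hy
  · simp [hb0 ⟨y, hy, rfl⟩, hε.le]

lemma tsum_fiber_mul_bump_eq {X Y R : Type*} [NonAssocSemiring R] [TopologicalSpace R]
    {σ : X → Y} (ψ g : X → R) {z : X} (hgz : g z = 1)
    (hg : ∀ w, σ w = σ z → w ≠ z → g w = 0) :
    ∑' w : σ ⁻¹' {σ z}, ψ w * g w = ψ z := by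
  rw [tsum_eq_single ⟨z, rfl⟩ fun w hw => by rw [hg w w.2 (Subtype.coe_ne_coe.2 hw), mul_zero]]
  simp [hgz]

namespace PositiveLinearMap

variable {X Y : Type*} [TopologicalSpace X] [CompactSpace X] [TopologicalSpace Y]
  [CompactSpace Y] [T2Space Y] (L : C(X, ℂ) →ₚ[ℂ] C(Y, ℂ)) {σ : C(X, Y)}

theorem apply_eq_zero_of_eqOn_fiber (hmod : ∀ f a, L (f * a.comp σ) = L f * a)
    {f : C(X, ℂ)} {x : Y} (hf : ∀ y, σ y = x → f y = 0) : L f x = 0 := by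
  obtain ⟨C, hC⟩ := L.exists_norm_apply_le
  refine norm_le_zero_iff.1 (le_of_forall_pos_le_add fun ε hε => ?_)
  obtain ⟨a, hax, ha⟩ :=
    σ.exists_apply_eq_one_norm_mul_comp_le hf (by positivity : 0 < ε / (C + 1))
  calc ‖L f x‖ = ‖L (f * a.comp σ) x‖ := by simp [hmod, hax]
    _ ≤ ‖L (f * a.comp σ)‖ := ContinuousMap.norm_coe_le_norm _ _
    _ ≤ C * (ε / (C + 1)) := (hC _).trans (by gcongr)
    _ ≤ 0 + ε := by
      rw [zero_add, mul_div_assoc', div_le_iff₀ (by positivity)]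
      nlinarith

theorem apply_eq_of_eqOn_fiber (hmod : ∀ f a, L (f * a.comp σ) = L f * a)
    {f g : C(X, ℂ)} {x : Y} (hfg : ∀ y, σ y = x → f y = g y) : L f x = L g x := by
  have := L.apply_eq_zero_of_eqOn_fiber hmod (f := f - g) fun y hy => sub_eq_zero.2 (hfg y hy)
  rwa [map_sub, ContinuousMap.sub_apply, sub_eq_zero] at this

theorem apply_eq_tsum_fiber (hmod : ∀ f a, L (f * a.comp σ) = L f * a) {x : Y}
    (hfin : (σ ⁻¹' {x}).Finite) {h : X → C(X, ℂ)} (hh₁ : ∀ y, h y y = 1)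
    (hh₀ : ∀ y w, σ w = σ y → w ≠ y → h y w = 0) (f : C(X, ℂ)) :
    L f x = ∑' y : σ ⁻¹' {x}, L (h y) (σ y) * f y := by
  have := hfin.fintype
  rw [tsum_fintype]
  calc L f x = L (∑ y : σ ⁻¹' {x}, f y • h y) x := L.apply_eq_of_eqOn_fiber hmod fun z hz => ?_
    _ = ∑ y : σ ⁻¹' {x}, f y * L (h y) x := by simp
    _ = _ := Finset.sum_congr rfl fun y _ => by rw [show σ y = x from y.2, mul_comm]
  rw [ContinuousMap.sum_apply, Finset.sum_eq_single ⟨z, hz⟩]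
  · simp [hh₁]
  · exact fun y _ hy => by
      simp [hh₀ y z (hz.trans y.2.symm) fun hzy => hy (Subtype.ext hzy.symm)]
  · simp

end PositiveLinearMap

theorem positive_module_map_eq_transfer_operator_general {X : Type*} [TopologicalSpace X]
    [CompactSpace X] [T2Space X] (σ : C(X, X)) (hloc : IsLocalHomeomorph (σ : X → X))
    (L : C(X, ℂ) → C(X, ℂ))
    (hadd : ∀ f g : C(X, ℂ), L (f + g) = L f + L g)
    (hsmul : ∀ (c : ℂ) (f : C(X, ℂ)), L (c • f) = c • L f)
    (hpos : ∀ f : C(X, ℂ), (∀ x, 0 ≤ f x) → ∀ x, 0 ≤ L f x)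
    (hmod : ∀ f a : C(X, ℂ), L (f * a.comp σ) = L f * a) :
    ∃! ψ : X → ℝ, (Continuous ψ ∧ ∀ x, 0 ≤ ψ x) ∧
      ∀ (f : C(X, ℂ)) (x : X),
        L f x = ∑' y : ((σ : X → X) ⁻¹' {x} : Set X), (ψ (y : X) : ℂ) * f (y : X) := by
  let Lpos : C(X, ℂ) →ₚ[ℂ] C(X, ℂ) := .mk₀ ⟨⟨L, hadd⟩, hsmul⟩ fun f hf =>
    ContinuousMap.le_def.2 (hpos f (ContinuousMap.le_def.1 hf))
  choose h hh_nonneg V hV hh using fun y => hloc.exists_bump_isolating_fiber_points y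
  let ψ₀ : X → ℝ := fun y => (L (h y) (σ y)).re
  have hψ₀ : ∀ y, L (h y) (σ y) = ψ₀ y := fun y =>
    Complex.eq_re_of_ofReal_le (by rw [Complex.ofReal_zero]; exact hpos _ (hh_nonneg y) (σ y))
  have apply_bump : ∀ ψ : X → ℝ, (∀ f x, L f x = ∑' y : σ ⁻¹' {x}, (ψ y : ℂ) * f y) →
      ∀ y, ∀ z ∈ V y, L (h y) (σ z) = ψ z := fun ψ hψ y z hz => by
    rw [hψ]
    exact tsum_fiber_mul_bump_eq (fun w => (ψ w : ℂ)) _ (hh y z hz).1 (hh y z hz).2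
  have hform : ∀ f x, L f x = ∑' y : σ ⁻¹' {x}, (ψ₀ y : ℂ) * f y := fun f x =>
    (Lpos.apply_eq_tsum_fiber hmod (hloc.finite_preimage_singleton x)
      (fun y => (hh y y (mem_of_mem_nhds (hV y))).1)
      (fun y => (hh y y (mem_of_mem_nhds (hV y))).2) f).trans
      (tsum_congr fun y => congrArg (· * f y) (hψ₀ y))
  refine ⟨ψ₀, ⟨⟨?_, fun y => ?_⟩, hform⟩, fun ψ ⟨_, hψ⟩ => ?_⟩
  · refine continuous_iff_continuousAt.2 fun y =>
      ContinuousAt.congr (f := fun z => (L (h y) (σ z)).re) (by fun_prop) ?_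
    filter_upwards [hV y] with z hz
    simp [apply_bump ψ₀ hform y z hz]
  · exact (Complex.nonneg_iff.1 (hpos _ (hh_nonneg y) (σ y))).1
  · funext y
    have hy := mem_of_mem_nhds (hV y)
    exact_mod_cast (apply_bump ψ hψ y y hy).symm.trans (apply_bump ψ₀ hform y y hy)

/-- Every positive linear module map `L : C(X) → C(X)` over a surjective local homeomorphism
`σ` is given by a unique continuous nonnegative potential `ψ` via
`L f x = ∑_{σ y = x} ψ y * f y`. -/
theorem positive_module_map_eq_transfer_operator {X : Type*} [TopologicalSpace X]
    [CompactSpace X] [T2Space X] (σ : C(X, X)) (hloc : IsLocalHomeomorph (σ : X → X))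
    (hsurj : Function.Surjective (σ : X → X))
    (L : C(X, ℂ) → C(X, ℂ))
    (hadd : ∀ f g : C(X, ℂ), L (f + g) = L f + L g)
    (hsmul : ∀ (c : ℂ) (f : C(X, ℂ)), L (c • f) = c • L f)
    (hpos : ∀ f : C(X, ℂ), (∀ x, 0 ≤ f x) → ∀ x, 0 ≤ L f x)
    (hmod : ∀ f a : C(X, ℂ), L (f * a.comp σ) = L f * a) :
    ∃! ψ : X → ℝ, (Continuous ψ ∧ ∀ x, 0 ≤ ψ x) ∧
      ∀ (f : C(X, ℂ)) (x : X),
        L f x = ∑' y : ((σ : X → X) ⁻¹' {x} : Set X), (ψ (y : X) : ℂ) * f (y : X) :=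
  positive_module_map_eq_transfer_operator_general σ hloc L hadd hsmul hpos hmod
end

section
/- Let X be compact Hausdorff, σ a surjective local homeomorphism, D a normalized potential, and 𝔰 : X → X_∞ a measurable section of the projective limit X_∞ = {(x₀,x₁,…) : σ(x_{n+1}) = x_n} with p ∘ 𝔰 = id, where p is projection onto the first coordinate. Writing 𝔰(x) = (x_n)_{n≥0}, the infinite product ∏_{i=1}^∞ D(x_i) is positive if and only if 𝔰(x) is an atom of positive mass for the measure ν^D_x on X_∞ determined by D. -/
open Filter Topology MeasureTheory

/-- The projective limit `X_∞ = {(x₀,x₁,…) : σ (x_{n+1}) = x_n}`. -/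
abbrev Xinf {X : Type*} (σ : X → X) : Type _ := {f : ℕ → X // ∀ n, σ (f (n + 1)) = f n}

/-- The projection `p : X_∞ → X` onto the zeroth coordinate. -/
def pInf {X : Type*} (σ : X → X) (xh : Xinf σ) : X := xh.val 0

/-- The map `σ_∞(x₀,x₁,…) = (σ x₀, x₀, x₁, …)` on the projective limit. -/
def sigmaInf {X : Type*} (σ : X → X) (xh : Xinf σ) : Xinf σ :=
  ⟨fun n => match n with
    | 0 => σ (xh.val 0)
    | k + 1 => xh.val k,
   by intro n; cases n with
      | zero => rfl
      | succ k => exact xh.prop k⟩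

/-- The shift `(x₀,x₁,x₂,…) ↦ (x₁,x₂,…)` on the projective limit. -/
def shiftInf {X : Type*} (σ : X → X) (xh : Xinf σ) : Xinf σ :=
  ⟨fun n => xh.val (n + 1), fun n => xh.prop (n + 1)⟩

/-! The mass of the atom `{𝔰 x}` is the limit of the masses of the cylinders
`{y | y₀ = x₀, …, y_n = x_n}` shrinking to it (continuity from above, the cylinder of
length `0` having finite mass `1`); these masses are the partial products
`∏_{i=1}^n D(x_i)`. A nonnegative real sequence whose images in `ℝ≥0∞` converge to a finite
limit `m` converges to `m.toReal`, which is positive exactly when `m` is. -/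

section Cylinder

variable {X : Type*} {σ : X → X}

def cylinderInf (xh : Xinf σ) (n : ℕ) : Set (Xinf σ) :=
  {yh | ∀ i ≤ n, yh.val i = xh.val i}

theorem cylinderInf_antitone (xh : Xinf σ) : Antitone (cylinderInf xh) :=
  fun _ _ hmn _ hy i hi => hy i (hi.trans hmn)

theorem iInter_cylinderInf (xh : Xinf σ) : ⋂ n, cylinderInf xh n = {xh} := by
  ext yh
  simp only [cylinderInf, Set.mem_iInter, Set.mem_ofPred_eq, Set.mem_singleton_iff]
  exact ⟨fun h => Subtype.ext (funext fun i => h i i le_rfl), fun h _ _ _ => h ▸ rfl⟩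

variable [MeasurableSpace X] [MeasurableSingletonClass X]

theorem measurableSet_cylinderInf (xh : Xinf σ) (n : ℕ) :
    MeasurableSet (cylinderInf xh n) := by
  simp only [cylinderInf, Set.ofPred_forall]
  exact .iInter fun i => .iInter fun _ =>
    ((measurable_pi_apply i).comp measurable_subtype_coe) (measurableSet_singleton _)

theorem tendsto_measure_cylinderInf (μ : Measure (Xinf σ)) (xh : Xinf σ)
    (h₀ : μ (cylinderInf xh 0) ≠ ⊤) :
    Tendsto (fun n => μ (cylinderInf xh n)) atTop (𝓝 (μ {xh})) := by
  rw [← iInter_cylinderInf xh]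
  exact tendsto_measure_iInter_atTop
    (fun n => (measurableSet_cylinderInf xh n).nullMeasurableSet)
    (cylinderInf_antitone xh) ⟨0, h₀⟩

end Cylinder

theorem exists_pos_tendsto_iff_of_tendsto_ofReal {ι : Type*} {l : Filter ι} [l.NeBot]
    {p : ι → ℝ} (hp : ∀ i, 0 ≤ p i) {m : ENNReal} (hm : m ≠ ⊤)
    (h : Tendsto (fun i => ENNReal.ofReal (p i)) l (𝓝 m)) :
    (∃ c : ℝ, 0 < c ∧ Tendsto p l (𝓝 c)) ↔ 0 < m := by
  have hlim : Tendsto p l (𝓝 m.toReal) := by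
    refine ((ENNReal.tendsto_toReal hm).comp h).congr fun i => ?_
    exact ENNReal.toReal_ofReal (hp i)
  constructor
  · rintro ⟨c, hc, hpc⟩
    rw [tendsto_nhds_unique hpc hlim] at hc
    exact ENNReal.toReal_pos_iff.mp hc |>.1
  · exact fun hm₀ => ⟨m.toReal, ENNReal.toReal_pos hm₀.ne' hm, hlim⟩

theorem product_positive_iff_atom_general {X : Type*} [TopologicalSpace X]
    [T2Space X] [MeasurableSpace X] [BorelSpace X]
    (σ : X → X)
    (D : X → ℝ) (hD0 : ∀ x, 0 ≤ D x)
    (ν : X → Measure (Xinf σ))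
    (𝔰 : X → Xinf σ)
    (hcyl : ∀ (x : X) (n : ℕ),
      ν x {yh : Xinf σ | ∀ i ≤ n, yh.val i = (𝔰 x).val i}
        = ∏ i ∈ Finset.Icc 1 n, ENNReal.ofReal (D ((𝔰 x).val i)))
    (x : X) :
    (∃ c : ℝ, 0 < c ∧
        Tendsto (fun n => ∏ i ∈ Finset.Icc 1 n, D ((𝔰 x).val i)) atTop (𝓝 c)) ↔
      0 < ν x {𝔰 x} := by
  have hcyl' (n : ℕ) : ν x (cylinderInf (𝔰 x) n)
      = ENNReal.ofReal (∏ i ∈ Finset.Icc 1 n, D ((𝔰 x).val i)) := by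
    rw [ENNReal.ofReal_prod_of_nonneg fun i _ => hD0 _]
    exact hcyl x n
  have h₀ : ν x (cylinderInf (𝔰 x) 0) ≠ ⊤ := by simp [hcyl']
  have hatom : ν x {𝔰 x} ≠ ⊤ := ne_top_of_le_ne_top h₀ <|
    measure_mono <| Set.singleton_subset_iff.mpr fun _ _ => rfl
  refine exists_pos_tendsto_iff_of_tendsto_ofReal
    (fun n => Finset.prod_nonneg fun i _ => hD0 _) hatom ?_
  simpa only [hcyl'] using tendsto_measure_cylinderInf (ν x) (𝔰 x) h₀

/-- Let `D` be a normalized potential and `𝔰` a measurable section of the projective limit.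
Writing `𝔰(x) = (x_n)`, the infinite product `∏_{i=1}^∞ D(x_i)` is positive (i.e. the
partial products converge to a positive limit) if and only if `𝔰(x)` is an atom of
positive mass for the Kolmogorov measure `ν^D_x`. -/
theorem product_positive_iff_atom {X : Type*} [TopologicalSpace X] [CompactSpace X]
    [T2Space X] [MeasurableSpace X] [BorelSpace X]
    (σ : X → X) (hloc : IsLocalHomeomorph σ) (hsurj : Function.Surjective σ)
    (D : X → ℝ) (hDc : Continuous D) (hD0 : ∀ x, 0 ≤ D x)
    (hDnorm : ∀ x : X, ∑' y : (σ ⁻¹' {x} : Set X), D (y : X) = 1)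
    (ν : X → Measure (Xinf σ)) (hprob : ∀ x, IsProbabilityMeasure (ν x))
    (𝔰 : X → Xinf σ) (hmeas : Measurable 𝔰) (hsec : ∀ x, pInf σ (𝔰 x) = x)
    (hcyl : ∀ (x : X) (n : ℕ),
      ν x {yh : Xinf σ | ∀ i ≤ n, yh.val i = (𝔰 x).val i}
        = ∏ i ∈ Finset.Icc 1 n, ENNReal.ofReal (D ((𝔰 x).val i)))
    (x : X) :
    (∃ c : ℝ, 0 < c ∧
        Tendsto (fun n => ∏ i ∈ Finset.Icc 1 n, D ((𝔰 x).val i)) atTop (𝓝 c)) ↔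
      0 < ν x {𝔰 x} :=
  product_positive_iff_atom_general σ D hD0 ν 𝔰 hcyl x
end

section
/- If 𝔰 : X → X_∞ is a positively supported section (ν^D_x({𝔰(x)}) > 0 for all x) and μ is any Borel probability measure on X, then the scaling function φ(x) = ∏_{i=1}^∞ 𝔲(x_i) lies in L²(X, μ) with ∫ |φ|² dμ ≤ 1. -/
open Filter Topology MeasureTheory

theorem norm_le_one_of_norm_sq_eq_measure_toReal {E Ω : Type*} [SeminormedAddGroup E]
    [MeasurableSpace Ω] {ν : Measure Ω} [IsZeroOrProbabilityMeasure ν] {a : E} {s : Set Ω}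
    (h : ‖a‖ ^ 2 = (ν s).toReal) : ‖a‖ ≤ 1 :=
  (pow_le_one_iff_of_nonneg (norm_nonneg a) two_ne_zero).1 (h ▸ measureReal_le_one)

theorem integral_norm_pow_le_one {α E : Type*} [MeasurableSpace α] [NormedAddCommGroup E]
    {μ : Measure α} [IsProbabilityMeasure μ] {f : α → E} (hf : ∀ᵐ x ∂μ, ‖f x‖ ≤ 1) (n : ℕ) :
    ∫ x, ‖f x‖ ^ n ∂μ ≤ 1 := by
  have hpow : ∀ᵐ x ∂μ, ‖‖f x‖ ^ n‖ ≤ 1 := by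
    filter_upwards [hf] with x hx
    rw [norm_pow, norm_norm]
    exact pow_le_one₀ (norm_nonneg _) hx
  calc ∫ x, ‖f x‖ ^ n ∂μ ≤ ‖∫ x, ‖f x‖ ^ n ∂μ‖ := Real.le_norm_self _
    _ ≤ 1 * μ.real Set.univ := norm_integral_le_of_norm_le_const hpow
    _ = 1 := by simp

theorem scaling_function_memL2_general {X : Type*} [MeasurableSpace X] (σ : X → X)
    (ν : X → Measure (Xinf σ)) (hprob : ∀ x, IsProbabilityMeasure (ν x))
    (𝔰 : X → Xinf σ)
    (φ : X → ℂ) (hφmeas : Measurable φ)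
    (hatom : ∀ x, ‖φ x‖ ^ 2 = (ν x {𝔰 x}).toReal)
    (μ : Measure X) [IsProbabilityMeasure μ] :
    MemLp φ 2 μ ∧ ∫ x, ‖φ x‖ ^ 2 ∂μ ≤ 1 := by
  have hφ_le_one : ∀ x, ‖φ x‖ ≤ 1 := fun x =>
    have := hprob x
    norm_le_one_of_norm_sq_eq_measure_toReal (hatom x)
  exact ⟨.of_bound hφmeas.aestronglyMeasurable 1 (.of_forall hφ_le_one),
    integral_norm_pow_le_one (.of_forall hφ_le_one) 2⟩

/-- If `𝔰` is a positively supported section (each `𝔰(x)` is an atom of `ν^D_x`) and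
`μ` is any Borel probability measure on `X`, then the scaling function `φ`, with
`|φ(x)|² = ν^D_x({𝔰(x)})`, lies in `L²(X, μ)` and `∫ |φ|² dμ ≤ 1`. -/
theorem scaling_function_memL2 {X : Type*} [TopologicalSpace X] [CompactSpace X]
    [T2Space X] [MeasurableSpace X] [BorelSpace X]
    (σ : X → X) (hloc : IsLocalHomeomorph σ) (hsurj : Function.Surjective σ)
    (𝔲 : X → ℂ) (hu : Continuous 𝔲)
    (hDnorm : ∀ x : X, ∑' y : (σ ⁻¹' {x} : Set X), ‖𝔲 (y : X)‖ ^ 2 = 1)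
    (ν : X → Measure (Xinf σ)) (hprob : ∀ x, IsProbabilityMeasure (ν x))
    (𝔰 : X → Xinf σ) (hmeas : Measurable 𝔰) (hsec : ∀ x, pInf σ (𝔰 x) = x)
    (hpossupp : ∀ x, 0 < ν x {𝔰 x})
    (φ : X → ℂ) (hφmeas : Measurable φ)
    (hatom : ∀ x, ‖φ x‖ ^ 2 = (ν x {𝔰 x}).toReal)
    (μ : Measure X) [IsProbabilityMeasure μ] :
    MemLp φ 2 μ ∧ ∫ x, ‖φ x‖ ^ 2 ∂μ ≤ 1 :=
  scaling_function_memL2_general σ ν hprob 𝔰 φ hφmeas hatom μ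
end
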